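/- Let G be a regular distribution function and H a distribution function with sup_{x ∈ ℝ} |G(x)^n − H(x)^n| → 0 as n → ∞. Then H is regular, G and H have the same right endpoint, and (1 − H(x))/(1 − G(x)) → 1 as x → G_*−. -/

import Mathlib

/-!
Since `a ^ n → 0` exactly when `|a| < 1`, uniform convergence of `G ^ n - H ^ n` to `0` forces
`G x < 1 ↔ H x < 1`, so the two right endpoints agree. Near the endpoint take
`n = ⌈1 / (1 - G x)⌉₊`: then `n (1 - G x) → 1`, so `G x ^ n → e⁻¹`, hence `H x ^ n → e⁻¹`, hence
`n (1 - H x) → 1`, because `n log a` and `n (a - 1)` have the same limit as `a → 1`. Dividing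
gives `(1 - H) / (1 - G) → 1`. This ratio limit survives passing to left limits, since the
filter of approach to the endpoint absorbs left neighbourhoods of its points, and then
`(1 - H(x-)) / (1 - H x)` factors through the corresponding ratios for `G`.
-/

open Filter Topology Classical

/-- A distribution function: nondecreasing, right-continuous, limits 0 and 1. -/
def IsDistFun (G : ℝ → ℝ) : Prop :=
  Monotone G ∧ (∀ x, ContinuousWithinAt G (Set.Ici x) x) ∧
    Tendsto G atBot (𝓝 0) ∧ Tendsto G atTop (𝓝 1)

/-- The filter of approach to the right endpoint `G_* = sup {x : G x < 1}` from the left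
(`atTop` if the endpoint is `+∞`). -/
noncomputable def endFilter (G : ℝ → ℝ) : Filter ℝ :=
  if BddAbove {x | G x < 1} then 𝓝[<] (sSup {x | G x < 1}) else atTop

/-- Regularity in the sense of O'Brien: `G(G_*−) = 1` and `(1−G(x−))/(1−G(x)) → 1`
as `x → G_*−`. -/
def RegularDF (G : ℝ → ℝ) : Prop :=
  Tendsto G (endFilter G) (𝓝 1) ∧
  Tendsto (fun x => (1 - Function.leftLim G x) / (1 - G x)) (endFilter G) (𝓝 1)

/-- Strict tail-equivalence: same right endpoint and `(1−H(x))/(1−G(x)) → 1` at the endpoint. -/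
def StrictTailEquiv (G H : ℝ → ℝ) : Prop :=
  (BddAbove {x | G x < 1} ↔ BddAbove {x | H x < 1}) ∧
  sSup {x | G x < 1} = sSup {x | H x < 1} ∧
  Tendsto (fun x => (1 - H x) / (1 - G x)) (endFilter G) (𝓝 1)

open Asymptotics

section PowLimits

variable {α : Type*} {l : Filter α} {a : α → ℝ} {n : α → ℕ} {c : ℝ}

lemma isEquivalent_log_sub_one (ha : Tendsto a l (𝓝 1)) :
    (fun x => Real.log (a x)) ~[l] fun x => a x - 1 := by
  have h := (Real.hasDerivAt_log one_ne_zero).isLittleO.comp_tendsto ha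
  simp only [Function.comp_def, Real.log_one, sub_zero, smul_eq_mul, inv_one, mul_one] at h
  exact h

lemma tendsto_mul_log_iff_tendsto_mul_sub_one (ha : Tendsto a l (𝓝 1)) :
    Tendsto (fun x => n x * Real.log (a x)) l (𝓝 c) ↔
      Tendsto (fun x => n x * (a x - 1)) l (𝓝 c) :=
  (IsEquivalent.refl.mul (isEquivalent_log_sub_one ha)).tendsto_nhds_iff

lemma tendsto_pow_of_tendsto_mul_sub_one (hn : Tendsto n l atTop)
    (h : Tendsto (fun x => n x * (a x - 1)) l (𝓝 c)) :
    Tendsto (fun x => a x ^ n x) l (𝓝 (Real.exp c)) := by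
  have hsub : Tendsto (fun x => a x - 1) l (𝓝 0) :=
    (h.div_atTop (tendsto_natCast_atTop_atTop.comp hn)).congr' <| by
      filter_upwards [hn.eventually_ne_atTop 0] with x hx
      simp [Function.comp_apply, hx]
  have ha : Tendsto a l (𝓝 1) := by simpa using hsub.add_const 1
  have hlog :=
    (Real.continuous_exp.tendsto c).comp ((tendsto_mul_log_iff_tendsto_mul_sub_one ha).2 h)
  refine hlog.congr' ?_
  filter_upwards [ha.eventually (lt_mem_nhds one_pos)] with x hx
  simp [Real.exp_nat_mul, Real.exp_log hx]

lemma tendsto_mul_sub_one_of_tendsto_pow (hn : Tendsto n l atTop) (ha : ∀ᶠ x in l, 0 ≤ a x)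
    (h : Tendsto (fun x => a x ^ n x) l (𝓝 (Real.exp c))) :
    Tendsto (fun x => n x * (a x - 1)) l (𝓝 c) := by
  have hpos : ∀ᶠ x in l, 0 < a x := by
    filter_upwards [ha, hn.eventually_ne_atTop 0, h.eventually (lt_mem_nhds (Real.exp_pos c))]
      with x hx hnx hpow
    refine hx.lt_of_ne' fun h0 => ?_
    simp [h0, zero_pow hnx] at hpow
  have hmul : Tendsto (fun x => n x * Real.log (a x)) l (𝓝 c) := by
    have := ((Real.continuousAt_log (Real.exp_pos c).ne').tendsto.comp h)
    rw [Real.log_exp] at this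
    exact this.congr fun x => by simp [Real.log_pow]
  have hlog : Tendsto (fun x => Real.log (a x)) l (𝓝 0) :=
    (hmul.div_atTop (tendsto_natCast_atTop_atTop.comp hn)).congr' <| by
      filter_upwards [hn.eventually_ne_atTop 0] with x hx
      simp [Function.comp_apply, hx]
  have ha1 : Tendsto a l (𝓝 1) := by
    have := (Real.continuous_exp.tendsto 0).comp hlog
    rw [Real.exp_zero] at this
    refine this.congr' ?_
    filter_upwards [hpos] with x hx using Real.exp_log hx
  exact (tendsto_mul_log_iff_tendsto_mul_sub_one ha1).1 hmul

end PowLimits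

lemma norm_lt_one_iff_of_tendsto_pow_sub_pow {R : Type*} [SeminormedRing R] [NormMulClass R]
    {a b : R} (h : Tendsto (fun n : ℕ => a ^ n - b ^ n) atTop (𝓝 0)) :
    ‖a‖ < 1 ↔ ‖b‖ < 1 := by
  simp only [← tendsto_pow_atTop_nhds_zero_iff_norm_lt_one]
  exact ⟨fun ha => by simpa using ha.sub h, fun hb => by simpa using h.add hb⟩

lemma tendsto_one_sub_div_one_sub_of_tendsto_pow_sub_pow {α : Type*} {l : Filter α}
    {a b : α → ℝ} (ha : Tendsto a l (𝓝 1)) (ha_lt : ∀ᶠ x in l, a x < 1)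
    (hb : ∀ᶠ x in l, 0 ≤ b x)
    (hab : ∀ n : α → ℕ, Tendsto n l atTop →
      Tendsto (fun x => b x ^ n x - a x ^ n x) l (𝓝 0)) :
    Tendsto (fun x => (1 - b x) / (1 - a x)) l (𝓝 1) := by
  have ht : Tendsto (fun x => (1 - a x)⁻¹) l atTop := by
    refine tendsto_inv_nhdsGT_zero.comp (tendsto_nhdsWithin_iff.2 ⟨?_, ?_⟩)
    · simpa using (tendsto_const_nhds (x := (1 : ℝ))).sub ha
    · filter_upwards [ha_lt] with x hx using sub_pos.2 hx
  set n : α → ℕ := fun x => ⌈(1 - a x)⁻¹⌉₊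
  have hn : Tendsto n l atTop := tendsto_nat_ceil_atTop.comp ht
  have hna : Tendsto (fun x => n x * (a x - 1)) l (𝓝 (-1)) := by
    refine (tendsto_nat_ceil_div_atTop.comp ht).neg.congr fun x => ?_
    simp only [Function.comp_apply, div_inv_eq_mul, n]
    ring
  have hbn : Tendsto (fun x => b x ^ n x) l (𝓝 (Real.exp (-1))) := by
    simpa using (tendsto_pow_of_tendsto_mul_sub_one hn hna).add (hab n hn)
  have hnb := tendsto_mul_sub_one_of_tendsto_pow hn hb hbn
  have hratio : Tendsto (fun x => n x * (b x - 1) / (n x * (a x - 1))) l (𝓝 1) := by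
    have h := hnb.div hna (by norm_num)
    rwa [neg_div_neg_eq, div_one] at h
  refine hratio.congr' ?_
  filter_upwards [hn.eventually_ne_atTop 0] with x hx
  rw [mul_div_mul_left _ _ (Nat.cast_ne_zero.2 hx), ← neg_div_neg_eq, neg_sub, neg_sub]

lemma eventually_ne_zero_of_tendsto_div {α : Type*} {l : Filter α} {f g : α → ℝ} {c : ℝ}
    (hc : c ≠ 0) (h : Tendsto (fun x => f x / g x) l (𝓝 c)) :
    ∀ᶠ x in l, f x ≠ 0 ∧ g x ≠ 0 :=
  (h.eventually_ne hc).mono fun _ => div_ne_zero_iff.1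

lemma tendsto_of_bind_le_of_eventually_tendsto {α β : Type*} [TopologicalSpace β]
    [RegularSpace β] {F : Filter α} {m : α → Filter α} [∀ x, (m x).NeBot]
    (hF : F.bind m ≤ F) {u v : α → β} {L : β} (hu : Tendsto u F (𝓝 L))
    (hv : ∀ᶠ x in F, Tendsto u (m x) (𝓝 (v x))) : Tendsto v F (𝓝 L) := by
  rw [(closed_nhds_basis L).tendsto_right_iff]
  rintro V ⟨hV, hV_closed⟩
  filter_upwards [hF (hu hV), hv] with x hux hvx
  exact hV_closed.mem_of_tendsto hvx hux

section LeftNeighbourhoods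

variable {α : Type*} [LinearOrder α] [TopologicalSpace α] [OrderTopology α]

lemma nhdsLT_bind_nhdsLT_le [NoMinOrder α] (a : α) :
    (𝓝[<] a).bind (fun x => 𝓝[<] x) ≤ 𝓝[<] a := by
  intro s hs
  obtain ⟨l, hl, hsub⟩ := mem_nhdsLT_iff_exists_Ioo_subset.1 hs
  refine mem_bind'.2 ?_
  filter_upwards [Ioo_mem_nhdsLT hl] with x hx
  exact mem_of_superset (Ioo_mem_nhdsLT hx.1) fun y hy => hsub ⟨hy.1, hy.2.trans hx.2⟩

lemma atTop_bind_nhdsLT_le [Nonempty α] [NoMaxOrder α] :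
    (atTop : Filter α).bind (fun x => 𝓝[<] x) ≤ atTop := by
  intro s hs
  obtain ⟨a, ha⟩ := mem_atTop_sets.1 hs
  refine mem_bind'.2 ?_
  filter_upwards [Ioi_mem_atTop a] with x hx
  exact mem_of_superset (Ioo_mem_nhdsLT hx) fun y hy => ha y hy.1.le

end LeftNeighbourhoods

lemma endFilter_bind_nhdsLT_le (G : ℝ → ℝ) :
    (endFilter G).bind (fun x => 𝓝[<] x) ≤ endFilter G := by
  unfold endFilter
  split_ifs
  exacts [nhdsLT_bind_nhdsLT_le _, atTop_bind_nhdsLT_le]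

lemma tendsto_one_sub_leftLim_div_one_sub_leftLim {G H : ℝ → ℝ} {F : Filter ℝ}
    (hF : F.bind (fun x => 𝓝[<] x) ≤ F) (hG : Monotone G) (hH : Monotone H)
    (hG_ne : ∀ᶠ x in F, 1 - Function.leftLim G x ≠ 0)
    (h : Tendsto (fun x => (1 - H x) / (1 - G x)) F (𝓝 1)) :
    Tendsto (fun x => (1 - Function.leftLim H x) / (1 - Function.leftLim G x)) F (𝓝 1) := by
  refine tendsto_of_bind_le_of_eventually_tendsto hF h ?_
  filter_upwards [hG_ne] with x hx
  exact (tendsto_const_nhds.sub (hH.tendsto_leftLim x)).div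
    (tendsto_const_nhds.sub (hG.tendsto_leftLim x)) hx

lemma StrictTailEquiv.endFilter_eq {G H : ℝ → ℝ} (h : StrictTailEquiv G H) :
    endFilter H = endFilter G := by
  simp only [endFilter, h.1, h.2.1]

lemma RegularDF.of_strictTailEquiv {G H : ℝ → ℝ} (hG : Monotone G) (hH : Monotone H)
    (hGreg : RegularDF G) (h : StrictTailEquiv G H) : RegularDF H := by
  rw [RegularDF, h.endFilter_eq]
  obtain ⟨hG_one, hG_left⟩ := hGreg
  have hratio := h.2.2
  -- a ratio tending to `1` eventually has a nonzero denominator (`x / 0 = 0`)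
  have hG_ne := eventually_ne_zero_of_tendsto_div one_ne_zero hG_left
  have hH_ne := eventually_ne_zero_of_tendsto_div one_ne_zero hratio
  have hleft := tendsto_one_sub_leftLim_div_one_sub_leftLim (endFilter_bind_nhdsLT_le G)
    hG hH (hG_ne.mono fun _ => And.left) hratio
  constructor
  · have hG_tail : Tendsto (fun x => 1 - G x) (endFilter G) (𝓝 0) := by
      simpa using hG_one.const_sub 1
    have hH_tail : Tendsto (fun x => 1 - H x) (endFilter G) (𝓝 0) := by
      have h := hratio.mul hG_tail
      rw [one_mul] at h
      refine h.congr' ?_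
      filter_upwards [hG_ne] with x hx using div_mul_cancel₀ _ hx.2
    simpa using hH_tail.const_sub 1
  · have hprod := (hleft.mul hG_left).div hratio one_ne_zero
    rw [one_mul, div_one] at hprod
    refine hprod.congr' ?_
    filter_upwards [hG_ne, hH_ne] with x hGx hHx
    simp only [Pi.div_apply]
    field_simp [hGx.1, hGx.2, hHx.1]

namespace IsDistFun

variable {G H : ℝ → ℝ}

lemma nonneg (hG : IsDistFun G) (x : ℝ) : 0 ≤ G x :=
  le_of_tendsto hG.2.2.1 (eventually_atBot.2 ⟨x, fun _ hy => hG.1 hy⟩)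

lemma le_one (hG : IsDistFun G) (x : ℝ) : G x ≤ 1 :=
  ge_of_tendsto hG.2.2.2 (eventually_atTop.2 ⟨x, fun _ hy => hG.1 hy⟩)

lemma abs_pow_sub_pow_le_iSup (hG : IsDistFun G) (hH : IsDistFun H) (n : ℕ) (x : ℝ) :
    |G x ^ n - H x ^ n| ≤ ⨆ y, |G y ^ n - H y ^ n| :=
  le_ciSup ⟨1, Set.forall_mem_range.2 fun y => abs_sub_le_of_nonneg_of_le
    (pow_nonneg (hG.nonneg y) n) (pow_le_one₀ (hG.nonneg y) (hG.le_one y))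
    (pow_nonneg (hH.nonneg y) n) (pow_le_one₀ (hH.nonneg y) (hH.le_one y))⟩ x

lemma tendsto_pow_sub_pow_of_tendsto_iSup (hG : IsDistFun G) (hH : IsDistFun H)
    (hsup : Tendsto (fun n : ℕ => ⨆ x, |G x ^ n - H x ^ n|) atTop (𝓝 0))
    {α : Type*} {l : Filter α} {n : α → ℕ} (hn : Tendsto n l atTop) (y : α → ℝ) :
    Tendsto (fun t => G (y t) ^ n t - H (y t) ^ n t) l (𝓝 0) :=
  squeeze_zero_norm (fun t => hG.abs_pow_sub_pow_le_iSup hH (n t) (y t)) (hsup.comp hn)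

lemma lt_one_iff_of_tendsto_iSup (hG : IsDistFun G) (hH : IsDistFun H)
    (hsup : Tendsto (fun n : ℕ => ⨆ x, |G x ^ n - H x ^ n|) atTop (𝓝 0)) (x : ℝ) :
    G x < 1 ↔ H x < 1 := by
  have h := norm_lt_one_iff_of_tendsto_pow_sub_pow
    (hG.tendsto_pow_sub_pow_of_tendsto_iSup hH hsup tendsto_id fun _ => x)
  rwa [Real.norm_of_nonneg (hG.nonneg x), Real.norm_of_nonneg (hH.nonneg x)] at h

end IsDistFun

theorem stmt3 (G H : ℝ → ℝ) (hG : IsDistFun G) (hGreg : RegularDF G)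
    (hH : IsDistFun H)
    (hsup : Tendsto (fun n : ℕ => ⨆ x : ℝ, |G x ^ n - H x ^ n|) atTop (𝓝 0)) :
    RegularDF H ∧ StrictTailEquiv G H := by
  have hsup' : Tendsto (fun n : ℕ => ⨆ x, |H x ^ n - G x ^ n|) atTop (𝓝 0) := by
    simpa only [abs_sub_comm] using hsup
  have hset : {x | G x < 1} = {x | H x < 1} :=
    Set.ext (hG.lt_one_iff_of_tendsto_iSup hH hsup)
  have hG_lt : ∀ᶠ x in endFilter G, G x < 1 :=
    (eventually_ne_zero_of_tendsto_div one_ne_zero hGreg.2).mono fun x hx =>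
      (hG.le_one x).lt_of_ne (sub_ne_zero.1 hx.2).symm
  have hratio : Tendsto (fun x => (1 - H x) / (1 - G x)) (endFilter G) (𝓝 1) :=
    tendsto_one_sub_div_one_sub_of_tendsto_pow_sub_pow hGreg.1 hG_lt
      (Eventually.of_forall hH.nonneg)
      fun _ hn => hH.tendsto_pow_sub_pow_of_tendsto_iSup hG hsup' hn id
  have htail : StrictTailEquiv G H := ⟨by rw [hset], by rw [hset], hratio⟩
  exact ⟨hGreg.of_strictTailEquiv hG.1 hH.1 htail, htail⟩
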